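/- If a binary word f is tilde-non-isometric, then either f has a 1-tilde-error overlap of type swap (i.e., some prefix and suffix of equal length l are at swap-mismatch distance 1 realized by a single swap), or f has a 2-tilde-error overlap (some prefix and suffix of equal length are at swap-mismatch distance exactly 2). -/

import Mathlib

/-- Edit operations on binary words: `R i` flips the bit at position `i`,
`S i` swaps the (distinct) bits at positions `i` and `i+1`. Positions are 0-based. -/
inductive TOp where
  | R (i : ℕ)
  | S (i : ℕ)
deriving DecidableEq

namespace TOp

def apply : TOp → List Bool → List Bool
  | R i, w => w.set i (!(w.getD i false))
  | S i, w => (w.set i (w.getD (i+1) false)).set (i+1) (w.getD i false)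

def valid : TOp → List Bool → Prop
  | R i, w => i < w.length
  | S i, w => i + 1 < w.length ∧ w.getD i false ≠ w.getD (i+1) false

/-- The set of positions modified by an operation. -/
def positions : TOp → Finset ℕ
  | R i => {i}
  | S i => {i, i+1}

/-- The (leftmost) position of an operation. -/
def pos : TOp → ℕ
  | R i => i
  | S i => i

def isR : TOp → Prop
  | R _ => True
  | S _ => False

def isS : TOp → Prop
  | R _ => False
  | S _ => True

end TOp

/-- All operations of a sequence are valid when applied successively starting from `w`. -/
def validSeq : List TOp → List Bool → Prop
  | [], _ => True
  | o :: os, w => o.valid w ∧ validSeq os (o.apply w)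

def applySeq : List TOp → List Bool → List Bool
  | [], w => w
  | o :: os, w => applySeq os (o.apply w)

/-- `ops` is a tilde-transformation from `u` to `v`. -/
def Transforms (ops : List TOp) (u v : List Bool) : Prop :=
  validSeq ops u ∧ applySeq ops u = v

/-- The swap-mismatch (tilde) distance between two words. -/
noncomputable def tdist (u v : List Bool) : ℕ :=
  sInf { n | ∃ ops : List TOp, ops.length = n ∧ Transforms ops u v }

/-- Each position of the word is modified at most once along the sequence. -/
def eachPosOnce (ops : List TOp) : Prop :=
  ops.Pairwise fun o o' => Disjoint o.positions o'.positions

/-- A minimal tilde-transformation: length `tdist u v`, each position changed at most once. -/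
def MinimalTransf (ops : List TOp) (u v : List Bool) : Prop :=
  Transforms ops u v ∧ ops.length = tdist u v ∧ eachPosOnce ops

/-- The list of all words `w_0 = u, w_1, …, w_h` visited by the transformation. -/
def trajectory (ops : List TOp) (u : List Bool) : List (List Bool) :=
  List.scanl (fun w o => o.apply w) u ops

/-- `w` avoids `f` as a factor. -/
def FFree (f w : List Bool) : Prop := ¬ f <:+: w

/-- All words along the transformation are `f`-free. -/
def FreeTransf (f : List Bool) (ops : List TOp) (u : List Bool) : Prop :=
  ∀ w ∈ trajectory ops u, FFree f w

/-- `f` is tilde-isometric. -/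
def TildeIsometric (f : List Bool) : Prop :=
  ∀ u v : List Bool, u.length = v.length → f.length < u.length →
    FFree f u → FFree f v →
      ∃ ops : List TOp, MinimalTransf ops u v ∧ FreeTransf f ops u

/-- `(u,v)` is a pair of tilde-witnesses for `f`. -/
def Witnesses (f u v : List Bool) : Prop :=
  u.length = v.length ∧ FFree f u ∧ FFree f v ∧ 2 ≤ tdist u v ∧
    ∀ ops : List TOp, MinimalTransf ops u v → ¬ FreeTransf f ops u

/-- Hamming distance between equal-length words (number of mismatch positions). -/
def hdist (u v : List Bool) : ℕ := ((u.zip v).filter fun p => p.1 != p.2).length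

/-!
Take `f`-free words `u, v` of equal length, with no `f`-free minimal transformation between them,
at the least possible distance, and a minimal transformation from `u` to `v` changing each position once (it
exists because an operation overlapping later ones can be merged with them into flips without
lengthening the sequence). By minimality of the distance, each of its operations `o` creates an
occurrence of `f` in `o u`, at some window `[A o, A o + |f|)`. Since `u` is `f`-free the window
contains a position of `o`, and since `v` is `f`-free it contains a position of another operation.

If no two operations `o, k` with `A o < A k` both touched the overlap of their windows, then the
operations `m` such that every operation with a smaller window ends before `A m` would form a
nonempty finite set without an element of largest window. For such `o, k` the overlap is a prefix
of `f`, read in `k u`, and a suffix of `f`, read in `o u`. Both are one operation away from the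
same factor of `u` and they differ in at least two positions, so they are one swap apart or at
distance exactly two.
-/

open scoped symmDiff

def bit (w : List Bool) (p : ℕ) : Bool := w.getD p false

theorem bit_set (w : List Bool) (i : ℕ) (x : Bool) (p : ℕ) :
    bit (w.set i x) p = if i = p ∧ p < w.length then x else bit w p := by
  simp only [bit, List.getD_eq_getElem?_getD, List.getElem?_set]
  by_cases h : i = p
  · subst h
    by_cases h2 : i < w.length <;> simp [h2]
  · simp [h]

theorem bit_of_length_le {w : List Bool} {p : ℕ} (h : w.length ≤ p) : bit w p = false := by
  simp [bit, List.getD_eq_getElem?_getD, List.getElem?_eq_none h]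

theorem List.ext_bit {w w' : List Bool} (hl : w.length = w'.length)
    (h : ∀ p, bit w p = bit w' p) : w = w' := by
  refine List.ext_getElem hl fun n h1 h2 => ?_
  simpa [bit, List.getD_eq_getElem?_getD, List.getElem?_eq_getElem h1,
    List.getElem?_eq_getElem h2] using h n

theorem bit_take_drop (w : List Bool) (b l j : ℕ) :
    bit ((w.drop b).take l) j = if j < l then bit w (b + j) else false := by
  simp only [bit, List.getD_eq_getElem?_getD, List.getElem?_take, List.getElem?_drop]
  split_ifs <;> rfl

namespace TOp

def lastPos : TOp → ℕ
  | R i => i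
  | S i => i + 1

theorem mem_positions {o : TOp} {p : ℕ} : p ∈ o.positions ↔ o.pos ≤ p ∧ p ≤ o.lastPos := by
  cases o <;> simp [positions, pos, lastPos] <;> omega

theorem lastPos_le (o : TOp) : o.pos ≤ o.lastPos ∧ o.lastPos ≤ o.pos + 1 := by
  cases o <;> simp [pos, lastPos]

theorem card_positions_le (o : TOp) : o.positions.card ≤ 2 := by
  cases o
  · simp [positions]
  · exact (Finset.card_insert_le _ _).trans (by simp)

theorem disjoint_positions_iff {o k : TOp} :
    Disjoint o.positions k.positions ↔ o.lastPos < k.pos ∨ k.lastPos < o.pos := by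
  have := o.lastPos_le
  have := k.lastPos_le
  constructor
  · intro h
    by_contra! hc
    exact Finset.disjoint_left.1 h (mem_positions.2 ⟨le_max_left o.pos k.pos, by omega⟩)
      (mem_positions.2 ⟨le_max_right _ _, by omega⟩)
  · intro h
    refine Finset.disjoint_left.2 fun p hp hk => ?_
    rw [mem_positions] at hp hk
    omega

def Meets (o : TOp) (a b : ℕ) : Prop := ∃ p ∈ o.positions, a ≤ p ∧ p < b

theorem meets_iff {o : TOp} {a b : ℕ} : o.Meets a b ↔ a ≤ o.lastPos ∧ o.pos < b ∧ a < b := by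
  have := o.lastPos_le
  constructor
  · rintro ⟨p, hp, hap, hpb⟩
    rw [mem_positions] at hp
    omega
  · intro h
    by_cases hp : a ≤ o.pos
    · exact ⟨o.pos, mem_positions.2 ⟨le_rfl, this.1⟩, hp, h.2.1⟩
    · exact ⟨o.lastPos, mem_positions.2 ⟨this.1, le_rfl⟩, h.1, by omega⟩

theorem length_apply (o : TOp) (w : List Bool) : (o.apply w).length = w.length := by
  cases o <;> simp [apply]

theorem lastPos_lt_length {o : TOp} {w : List Bool} (h : o.valid w) : o.lastPos < w.length := by
  cases o with
  | R i => exact h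
  | S i => exact h.1

theorem bit_apply_of_not_mem {o : TOp} {p : ℕ} (h : p ∉ o.positions) (w : List Bool) :
    bit (o.apply w) p = bit w p := by
  cases o <;> simp_all [apply, positions, bit_set, eq_comm]

theorem bit_apply {o : TOp} {w : List Bool} (hv : o.valid w) (p : ℕ) :
    bit (o.apply w) p = if p ∈ o.positions then !bit w p else bit w p := by
  split_ifs with hp
  · cases o with
    | R i =>
      simp only [positions, Finset.mem_singleton] at hp
      subst hp
      simp [apply, show p < w.length from hv, bit]
    | S i =>
      obtain ⟨hlen, hne⟩ := hv
      change bit w i ≠ bit w (i + 1) at hne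
      change bit ((w.set i (bit w (i + 1))).set (i + 1) (bit w i)) p = !bit w p
      simp only [positions, Finset.mem_insert, Finset.mem_singleton] at hp
      rw [bit_set, bit_set, List.length_set]
      rcases hp with rfl | rfl
      · simp only [Nat.succ_ne_self, false_and, if_false, true_and, if_pos (by omega : p < w.length)]
        revert hne; cases bit w p <;> cases bit w (p + 1) <;> simp
      · simp only [true_and, if_pos hlen]
        revert hne; cases bit w i <;> cases bit w (i + 1) <;> simp
  · exact bit_apply_of_not_mem hp w

theorem valid_iff_of_bit_eq {o : TOp} {w w' : List Bool} (hl : w.length = w'.length)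
    (hb : ∀ p ∈ o.positions, bit w p = bit w' p) : o.valid w ↔ o.valid w' := by
  cases o with
  | R i => simp only [valid, hl]
  | S i =>
    have h0 := hb i (by simp [positions])
    have h1 := hb (i + 1) (by simp [positions])
    simp only [bit] at h0 h1
    simp only [valid, hl, h0, h1]

theorem valid_apply {o : TOp} {w : List Bool} (hv : o.valid w) : o.valid (o.apply w) := by
  cases o with
  | R i => simpa [valid, length_apply] using hv
  | S i =>
    refine ⟨by simpa [length_apply] using hv.1, ?_⟩
    have h0 := bit_apply hv i
    have h1 := bit_apply hv (i + 1)
    simp only [positions, Finset.mem_insert, Finset.mem_singleton, true_or, or_true,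
      if_true] at h0 h1
    simp only [bit] at h0 h1 ⊢
    rw [h0, h1]
    simpa using hv.2

theorem apply_apply {o : TOp} {w : List Bool} (hv : o.valid w) : o.apply (o.apply w) = w := by
  refine List.ext_bit (by simp [length_apply]) fun p => ?_
  rw [bit_apply (valid_apply hv), bit_apply hv]
  split_ifs <;> simp

end TOp

def touched (ops : List TOp) : Finset ℕ := ops.toFinset.biUnion TOp.positions

theorem mem_touched {ops : List TOp} {p : ℕ} : p ∈ touched ops ↔ ∃ o ∈ ops, p ∈ o.positions := by
  simp [touched]

theorem eachPosOnce_cons {o : TOp} {ops : List TOp} :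
    eachPosOnce (o :: ops) ↔ (∀ c ∈ ops, Disjoint o.positions c.positions) ∧ eachPosOnce ops :=
  List.pairwise_cons

theorem eachPosOnce.disjoint {ops : List TOp} (h : eachPosOnce ops) {o k : TOp} (ho : o ∈ ops)
    (hk : k ∈ ops) (hne : o ≠ k) : Disjoint o.positions k.positions :=
  haveI : Std.Symm fun o k : TOp => Disjoint o.positions k.positions := ⟨fun _ _ h => h.symm⟩
  h.forall ho hk hne

theorem eachPosOnce.perm {ops ops' : List TOp} (h : eachPosOnce ops) (hp : ops.Perm ops') :
    eachPosOnce ops' :=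
  hp.pairwise h fun h => h.symm

theorem length_applySeq (ops : List TOp) (u : List Bool) :
    (applySeq ops u).length = u.length := by
  induction ops generalizing u with
  | nil => rfl
  | cons o os ih => simp [applySeq, ih, TOp.length_apply]

theorem valid_apply_iff_of_disjoint {o c : TOp} (hd : Disjoint o.positions c.positions)
    (u : List Bool) : c.valid (o.apply u) ↔ c.valid u :=
  TOp.valid_iff_of_bit_eq (TOp.length_apply o u) fun _ hp =>
    TOp.bit_apply_of_not_mem (Finset.disjoint_right.1 hd hp) u

theorem validSeq_iff_of_eachPosOnce {ops : List TOp} (h : eachPosOnce ops) {u : List Bool} :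
    validSeq ops u ↔ ∀ o ∈ ops, o.valid u := by
  induction ops generalizing u with
  | nil => simp [validSeq]
  | cons o os ih =>
    rw [eachPosOnce_cons] at h
    simp only [validSeq, ih h.2, List.forall_mem_cons]
    exact and_congr_right fun _ =>
      forall₂_congr fun c hc => valid_apply_iff_of_disjoint (h.1 c hc) u

theorem bit_applySeq {ops : List TOp} (h : eachPosOnce ops) {u : List Bool}
    (hv : validSeq ops u) (p : ℕ) :
    bit (applySeq ops u) p = if p ∈ touched ops then !bit u p else bit u p := by
  induction ops generalizing u with
  | nil => simp [applySeq, touched]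
  | cons o os ih =>
    rw [eachPosOnce_cons] at h
    have hos : p ∈ touched os → p ∉ o.positions := fun hp ho => by
      obtain ⟨c, hc, hpc⟩ := mem_touched.1 hp
      exact Finset.disjoint_left.1 (h.1 c hc) ho hpc
    have hmem : p ∈ touched (o :: os) ↔ p ∈ o.positions ∨ p ∈ touched os := by
      simp [mem_touched]
    simp only [applySeq, ih h.2 hv.2, TOp.bit_apply hv.1, hmem]
    by_cases h1 : p ∈ touched os <;> by_cases h2 : p ∈ o.positions <;> simp_all

theorem transforms_cons {o : TOp} {ops : List TOp} {u v : List Bool} :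
    Transforms (o :: ops) u v ↔ o.valid u ∧ Transforms ops (o.apply u) v := by
  simp [Transforms, validSeq, applySeq, and_assoc]

theorem Transforms.length_eq {ops : List TOp} {u v : List Bool} (h : Transforms ops u v) :
    u.length = v.length := by
  rw [← h.2, length_applySeq]

theorem Transforms.append {A B : List TOp} {u v w : List Bool} (hA : Transforms A u v)
    (hB : Transforms B v w) : Transforms (A ++ B) u w := by
  induction A generalizing u with
  | nil => obtain ⟨-, rfl⟩ := hA; exact hB
  | cons o os ih =>
    rw [List.cons_append, transforms_cons]
    rw [transforms_cons] at hA
    exact ⟨hA.1, ih hA.2⟩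

theorem transforms_of_bit {C : List TOp} (hC : eachPosOnce C) {u v : List Bool}
    (hv : ∀ c ∈ C, c.valid u) (hl : u.length = v.length)
    (hb : ∀ p, bit v p = if p ∈ touched C then !bit u p else bit u p) : Transforms C u v := by
  have hvs := (validSeq_iff_of_eachPosOnce hC).2 hv
  refine ⟨hvs, List.ext_bit (by rw [length_applySeq, hl]) fun p => ?_⟩
  rw [bit_applySeq hC hvs, hb]

theorem Transforms.mem_touched_iff {ops : List TOp} {u v : List Bool} (h : Transforms ops u v)
    (he : eachPosOnce ops) (p : ℕ) : p ∈ touched ops ↔ bit u p ≠ bit v p := by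
  rw [← h.2, bit_applySeq he h.1]
  split_ifs <;> simp_all

theorem Transforms.perm {ops ops' : List TOp} {u v : List Bool} (h : Transforms ops u v)
    (he : eachPosOnce ops) (hp : ops.Perm ops') : Transforms ops' u v := by
  have htouched : touched ops' = touched ops := by
    ext p
    simp only [mem_touched, hp.mem_iff]
  refine transforms_of_bit (he.perm hp)
    (fun c hc => (validSeq_iff_of_eachPosOnce he).1 h.1 c (hp.mem_iff.2 hc)) h.length_eq
    fun p => ?_
  rw [← h.2, bit_applySeq he h.1, htouched]

theorem exists_flips {u : List Bool} (D : Finset ℕ) (hD : ∀ p ∈ D, p < u.length) :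
    ∃ F : List TOp, eachPosOnce F ∧ F.length = D.card ∧ (∀ c ∈ F, c.valid u) ∧ touched F = D := by
  refine ⟨D.toList.map TOp.R, ?_, by simp, ?_, ?_⟩
  · refine List.pairwise_map.2 (D.nodup_toList.imp fun hne => ?_)
    simpa [TOp.positions] using hne
  · simpa [TOp.valid] using hD
  · ext p
    simp [mem_touched, TOp.positions]

theorem exists_transforms {u v : List Bool} (h : u.length = v.length) :
    ∃ ops, Transforms ops u v := by
  classical
  obtain ⟨F, hF, -, hv, hD⟩ := exists_flips ((Finset.range u.length).filter
    fun p => bit u p ≠ bit v p) (fun p hp => by simpa using (Finset.mem_filter.1 hp).1)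
  refine ⟨F, transforms_of_bit hF hv h fun p => ?_⟩
  rw [hD]
  by_cases hp : p < u.length
  · simp only [Finset.mem_filter, Finset.mem_range, hp, true_and]
    generalize bit u p = x; generalize bit v p = y; cases x <;> cases y <;> simp
  · simp [hp, bit_of_length_le (not_lt.1 hp), bit_of_length_le (h ▸ not_lt.1 hp : v.length ≤ p)]

theorem tdist_le {ops : List TOp} {u v : List Bool} (h : Transforms ops u v) :
    tdist u v ≤ ops.length :=
  Nat.sInf_le ⟨ops, rfl, h⟩

theorem exists_transforms_length_eq_tdist {u v : List Bool} (h : u.length = v.length) :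
    ∃ ops, ops.length = tdist u v ∧ Transforms ops u v :=
  Nat.sInf_mem (s := {n | ∃ ops, ops.length = n ∧ Transforms ops u v})
    (let ⟨ops, hops⟩ := exists_transforms h; ⟨_, ops, rfl, hops⟩)

theorem tdist_self (u : List Bool) : tdist u u = 0 :=
  Nat.le_zero.1 (tdist_le (ops := []) ⟨trivial, rfl⟩)

theorem eq_of_tdist_eq_zero {u v : List Bool} (hl : u.length = v.length) (h : tdist u v = 0) :
    u = v := by
  obtain ⟨ops, hlen, hops⟩ := exists_transforms_length_eq_tdist hl
  rw [h, List.length_eq_zero_iff] at hlen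
  subst hlen
  exact hops.2

theorem tdist_triangle {u v w : List Bool} (huv : u.length = v.length) (hvw : v.length = w.length) :
    tdist u w ≤ tdist u v + tdist v w := by
  obtain ⟨A, hA, hAt⟩ := exists_transforms_length_eq_tdist huv
  obtain ⟨B, hB, hBt⟩ := exists_transforms_length_eq_tdist hvw
  simpa [hA, hB] using tdist_le (hAt.append hBt)

theorem tdist_apply_le_one {o : TOp} {u : List Bool} (h : o.valid u) : tdist u (o.apply u) ≤ 1 :=
  tdist_le (ops := [o]) ⟨⟨h, trivial⟩, rfl⟩

theorem card_sdiff_le_one {s t : Finset ℕ} (hs : s.card ≤ 2) (h : ¬Disjoint s t) :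
    (s \ t).card ≤ 1 := by
  obtain ⟨x, hxs, hxt⟩ := Finset.not_disjoint_iff.1 h
  calc (s \ t).card ≤ (s.erase x).card :=
        Finset.card_le_card fun y hy => by
          rw [Finset.mem_sdiff] at hy
          exact Finset.mem_erase.2 ⟨fun hyx => hy.2 (hyx ▸ hxt), hy.1⟩
    _ ≤ 1 := by rw [Finset.card_erase_of_mem hxs]; omega

theorem card_symmDiff_touched_le {z : TOp} {Co : List TOp} (hne : Co ≠ [])
    (hCo : ∀ c ∈ Co, ¬Disjoint z.positions c.positions) :
    (z.positions ∆ touched Co).card ≤ Co.length + 1 := by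
  obtain ⟨c₀, hc₀⟩ := List.exists_mem_of_ne_nil Co hne
  have hz : (z.positions \ touched Co).card ≤ 1 := by
    refine card_sdiff_le_one z.card_positions_le fun hd => hCo c₀ hc₀ ?_
    exact hd.mono_right fun p hp => mem_touched.2 ⟨c₀, hc₀, hp⟩
  have hT : (touched Co \ z.positions).card ≤ Co.length := by
    have : touched Co \ z.positions = Co.toFinset.biUnion (·.positions \ z.positions) := by
      ext p
      simp only [Finset.mem_sdiff, mem_touched, Finset.mem_biUnion, List.mem_toFinset]
      constructor
      · rintro ⟨⟨c, hc, hpc⟩, hpz⟩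
        exact ⟨c, hc, hpc, hpz⟩
      · rintro ⟨c, hc, hpc, hpz⟩
        exact ⟨⟨c, hc, hpc⟩, hpz⟩
    rw [this]
    refine Finset.card_biUnion_le.trans ((Finset.sum_le_card_nsmul _ _ 1 fun c hc => ?_).trans ?_)
    · exact card_sdiff_le_one c.card_positions_le fun hd =>
        hCo c (List.mem_toFinset.1 hc) hd.symm
    · simpa using List.toFinset_card_le Co
  rw [symmDiff_def, Finset.sup_eq_union]
  exact (Finset.card_union_le _ _).trans (by omega)

theorem mem_touched_append {A B : List TOp} {p : ℕ} :
    p ∈ touched (A ++ B) ↔ p ∈ touched A ∨ p ∈ touched B := by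
  simp only [mem_touched, List.mem_append, or_and_right, exists_or]

theorem lt_length_of_mem_touched {C : List TOp} {u : List Bool} (hv : ∀ c ∈ C, c.valid u)
    {p : ℕ} (hp : p ∈ touched C) : p < u.length := by
  obtain ⟨c, hc, hpc⟩ := mem_touched.1 hp
  exact (TOp.mem_positions.1 hpc).2.trans_lt (TOp.lastPos_lt_length (hv c hc))

/-- The witness is `Cd` followed by single flips at the positions of `z.positions ∆ touched Co`. -/
theorem eachPosOnce.disjoint_touched_append {A B : List TOp} (h : eachPosOnce (A ++ B)) :
    Disjoint (touched A) (touched B) := by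
  refine Finset.disjoint_left.2 fun p hpA hpB => ?_
  obtain ⟨a, ha, hpa⟩ := mem_touched.1 hpA
  obtain ⟨b, hb, hpb⟩ := mem_touched.1 hpB
  exact Finset.disjoint_left.1 ((List.pairwise_append.1 h).2.2 a ha b hb) hpa hpb

theorem exists_eachPosOnce_merge {z : TOp} {Cd Co : List TOp} {u w : List Bool}
    (hz : z.valid u) (hC : eachPosOnce (Cd ++ Co)) (hCt : Transforms (Cd ++ Co) (z.apply u) w)
    (hd : ∀ c ∈ Cd, Disjoint z.positions c.positions)
    (ho : ∀ c ∈ Co, ¬Disjoint z.positions c.positions) (hCo : Co ≠ []) :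
    ∃ C', eachPosOnce C' ∧ Transforms C' u w ∧ C'.length ≤ Cd.length + Co.length + 1 := by
  have hvalid := (validSeq_iff_of_eachPosOnce hC).1 hCt.1
  have hsep : ∀ p ∈ touched Cd, p ∉ z.positions ∧ p ∉ touched Co := fun p hp =>
    ⟨fun hpz => let ⟨c, hc, hpc⟩ := mem_touched.1 hp; Finset.disjoint_left.1 (hd c hc) hpz hpc,
      Finset.disjoint_left.1 hC.disjoint_touched_append hp⟩
  obtain ⟨F, hF, hFlen, hFv, hFD⟩ := exists_flips (u := u) (z.positions ∆ touched Co) (by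
    intro p hp
    rcases Finset.mem_symmDiff.1 hp with ⟨hpz, -⟩ | ⟨hpT, -⟩
    · exact (TOp.mem_positions.1 hpz).2.trans_lt (TOp.lastPos_lt_length hz)
    · exact TOp.length_apply z u ▸
        lt_length_of_mem_touched (fun c hc => hvalid c (List.mem_append_right _ hc)) hpT)
  have hC' : eachPosOnce (Cd ++ F) := by
    refine List.pairwise_append.2 ⟨(List.pairwise_append.1 hC).1, hF, fun c hc x hx => ?_⟩
    refine Finset.disjoint_left.2 fun p hpc hpx => ?_
    have h1 : p ∈ z.positions ∆ touched Co := hFD ▸ mem_touched.2 ⟨x, hx, hpx⟩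
    have h2 := hsep p (mem_touched.2 ⟨c, hc, hpc⟩)
    rcases Finset.mem_symmDiff.1 h1 with h | h <;> tauto
  refine ⟨Cd ++ F, hC', transforms_of_bit hC' (fun c hc => ?_)
    (TOp.length_apply z u ▸ hCt.length_eq) fun p => ?_, ?_⟩
  · rcases List.mem_append.1 hc with hc | hc
    · exact (valid_apply_iff_of_disjoint (hd c hc) u).1 (hvalid c (List.mem_append_left _ hc))
    · exact hFv c hc
  · rw [← hCt.2, bit_applySeq hC hCt.1, TOp.bit_apply hz]
    simp only [mem_touched_append, hFD]
    by_cases h1 : p ∈ touched Cd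
    · simp [h1, hsep p h1]
    · by_cases h2 : p ∈ z.positions <;> by_cases h3 : p ∈ touched Co <;>
        simp [h1, h2, h3, Finset.mem_symmDiff]
  · have := card_symmDiff_touched_le hCo ho
    rw [List.length_append, hFlen]
    omega

theorem exists_eachPosOnce_cons {z : TOp} {C : List TOp} {u w : List Bool} (hz : z.valid u)
    (hC : eachPosOnce C) (hCt : Transforms C (z.apply u) w) :
    ∃ C', eachPosOnce C' ∧ Transforms C' u w ∧ C'.length ≤ C.length + 1 := by
  by_cases hdis : ∀ c ∈ C, Disjoint z.positions c.positions
  · exact ⟨z :: C, eachPosOnce_cons.2 ⟨hdis, hC⟩, transforms_cons.2 ⟨hz, hCt⟩, by simp⟩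
  classical
  set P : TOp → Bool := fun c => Disjoint z.positions c.positions
  have hperm := (C.filter_append_perm P).symm
  obtain ⟨C', hC', hC't, hlen⟩ := exists_eachPosOnce_merge hz (hC.perm hperm)
    (hCt.perm hC hperm) (fun c hc => by simpa [P] using (List.mem_filter.1 hc).2)
    (fun c hc => by simpa [P] using (List.mem_filter.1 hc).2) (by
      obtain ⟨c, hc, hcd⟩ : ∃ c ∈ C, ¬Disjoint z.positions c.positions := by simpa using hdis
      exact List.ne_nil_of_mem (List.mem_filter.2 ⟨hc, by simpa [P] using hcd⟩))
  have := hperm.length_eq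
  rw [List.length_append] at this
  exact ⟨C', hC', hC't, by omega⟩

theorem exists_eachPosOnce_transforms {ops : List TOp} {u w : List Bool}
    (h : Transforms ops u w) : ∃ C, eachPosOnce C ∧ Transforms C u w ∧ C.length ≤ ops.length := by
  induction ops generalizing u with
  | nil => exact ⟨[], List.Pairwise.nil, h, le_rfl⟩
  | cons o os ih =>
    obtain ⟨ho, hos⟩ := transforms_cons.1 h
    obtain ⟨C, hC, hCt, hClen⟩ := ih hos
    obtain ⟨C', hC', hC't, hC'len⟩ := exists_eachPosOnce_cons ho hC hCt
    exact ⟨C', hC', hC't, by rw [List.length_cons]; omega⟩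

theorem exists_minimalTransf {u v : List Bool} (h : u.length = v.length) :
    ∃ ops, MinimalTransf ops u v := by
  obtain ⟨ops, hlen, hops⟩ := exists_transforms_length_eq_tdist h
  obtain ⟨C, hC, hCt, hClen⟩ := exists_eachPosOnce_transforms hops
  exact ⟨C, hCt, le_antisymm (hlen ▸ hClen) (tdist_le hCt), hC⟩

theorem MinimalTransf.tdist_apply_add_one {ops : List TOp} {u v : List Bool}
    (h : MinimalTransf ops u v) {o : TOp} (ho : o ∈ ops) : tdist (o.apply u) v + 1 = tdist u v := by
  obtain ⟨hvo, hrest⟩ := transforms_cons.1 (h.1.perm h.2.2 (List.perm_cons_erase ho))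
  have hle := tdist_le hrest
  rw [List.length_erase_of_mem ho] at hle
  obtain ⟨C, hClen, hC⟩ := exists_transforms_length_eq_tdist hrest.length_eq
  have hge := tdist_le (transforms_cons.2 ⟨hvo, hC⟩)
  have := List.length_pos_of_mem ho
  have := h.2.1
  simp only [List.length_cons, hClen] at hge
  omega

theorem MinimalTransf.cons {ops ops₁ : List TOp} {u v : List Bool} (h : MinimalTransf ops u v)
    {o : TOp} (ho : o ∈ ops) (h₁ : MinimalTransf ops₁ (o.apply u) v) :
    MinimalTransf (o :: ops₁) u v := by
  have hvo := (validSeq_iff_of_eachPosOnce h.2.2).1 h.1.1 o ho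
  refine ⟨transforms_cons.2 ⟨hvo, h₁.1⟩, ?_, eachPosOnce_cons.2 ⟨fun c hc => ?_, h₁.2.2⟩⟩
  · rw [List.length_cons, h₁.2.1, h.tdist_apply_add_one ho]
  · -- `o` repairs its positions, so no later operation of a minimal transformation touches them
    refine Finset.disjoint_left.2 fun p hpo hpc => ?_
    have h1 := (h.1.mem_touched_iff h.2.2 p).1 (mem_touched.2 ⟨o, ho, hpo⟩)
    have h2 := (h₁.1.mem_touched_iff h₁.2.2 p).1 (mem_touched.2 ⟨c, hc, hpc⟩)
    rw [TOp.bit_apply hvo, if_pos hpo] at h2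
    revert h1 h2
    cases bit u p <;> cases bit v p <;> simp

theorem freeTransf_cons {f u : List Bool} {o : TOp} {ops : List TOp} :
    FreeTransf f (o :: ops) u ↔ FFree f u ∧ FreeTransf f ops (o.apply u) := by
  simp [FreeTransf, trajectory, List.scanl]

theorem infix_iff_exists_take_drop {f w : List Bool} :
    f <:+: w ↔ ∃ a, (w.drop a).take f.length = f := by
  rw [List.infix_iff_prefix_suffix]
  constructor
  · rintro ⟨t, hft, htw⟩
    refine ⟨w.length - t.length, ?_⟩
    rw [← List.suffix_iff_eq_drop.1 htw, ← List.prefix_iff_eq_take.1 hft]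
  · rintro ⟨a, ha⟩
    rw [← ha]
    exact ⟨w.drop a, List.take_prefix _ _, List.drop_suffix _ _⟩

theorem take_drop_eq_of_bit_eq {w w' : List Bool} (hl : w.length = w'.length) {a l : ℕ}
    (h : ∀ p, a ≤ p → p < a + l → bit w p = bit w' p) :
    (w.drop a).take l = (w'.drop a).take l :=
  List.ext_bit (by simp [hl]) fun j => by
    rw [bit_take_drop, bit_take_drop]
    split_ifs with hj
    · exact h _ (by omega) (by omega)
    · rfl

namespace TOp

theorem take_drop_apply_of_not_meets {o : TOp} {a l : ℕ} (h : ¬o.Meets a (a + l))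
    (u : List Bool) : ((o.apply u).drop a).take l = (u.drop a).take l :=
  take_drop_eq_of_bit_eq (o.length_apply u) fun p hap hpl =>
    o.bit_apply_of_not_mem (fun hp => h ⟨p, hp, hap, hpl⟩) u

theorem take_drop_apply_ne {o k : TOp} {u : List Bool} (hv : o.valid u)
    (hd : Disjoint o.positions k.positions) {a l : ℕ} (hm : o.Meets a (a + l)) :
    ((o.apply u).drop a).take l ≠ ((k.apply u).drop a).take l := by
  obtain ⟨p, hp, hap, hpl⟩ := hm
  intro heq
  have := congrArg (bit · (p - a)) heq
  simp only [bit_take_drop, if_pos (by omega : p - a < l), Nat.add_sub_cancel' hap] at this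
  rw [o.bit_apply hv, if_pos hp, k.bit_apply_of_not_mem (Finset.disjoint_left.1 hd hp)] at this
  simp at this

theorem exists_restrict {o : TOp} {u : List Bool} (hv : o.valid u) (b l : ℕ) :
    ¬o.Meets b (b + l) ∨ ∃ o' : TOp, o'.valid ((u.drop b).take l) ∧
      ∀ j, j ∈ o'.positions ↔ j < l ∧ b + j ∈ o.positions := by
  rw [meets_iff]
  have hR : ∀ q, q < u.length → b ≤ q → q < b + l → (R (q - b)).valid ((u.drop b).take l) :=
    fun q hq hbq hql => by simp only [valid, List.length_take, List.length_drop]; omega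
  cases o with
  | R i =>
    by_cases h : b ≤ i ∧ i < b + l
    · refine Or.inr ⟨R (i - b), hR i hv h.1 h.2, fun j => ?_⟩
      simp only [positions, Finset.mem_singleton]; omega
    · left; simp only [pos, lastPos]; omega
  | S i =>
    obtain ⟨hlen, hne⟩ := hv
    change bit u i ≠ bit u (i + 1) at hne
    by_cases h1 : b ≤ i ∧ i + 1 < b + l
    · refine Or.inr ⟨S (i - b), ⟨?_, ?_⟩, fun j => ?_⟩
      · simp only [List.length_take, List.length_drop]; omega
      · change bit _ (i - b) ≠ bit _ (i - b + 1)
        rwa [bit_take_drop, bit_take_drop, if_pos (by omega), if_pos (by omega),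
          show b + (i - b) = i by omega, show b + (i - b + 1) = i + 1 by omega]
      · simp only [positions, Finset.mem_insert, Finset.mem_singleton]; omega
    by_cases h2 : b ≤ i ∧ i < b + l
    · refine Or.inr ⟨R (i - b), hR i (by omega) h2.1 h2.2, fun j => ?_⟩
      simp only [positions, Finset.mem_insert, Finset.mem_singleton]; omega
    by_cases h3 : b ≤ i + 1 ∧ i + 1 < b + l
    · refine Or.inr ⟨R (i + 1 - b), hR (i + 1) hlen h3.1 h3.2, fun j => ?_⟩
      simp only [positions, Finset.mem_insert, Finset.mem_singleton]; omega
    · left; simp only [pos, lastPos]; omega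

theorem tdist_take_drop_apply_le_one {o : TOp} {u : List Bool} (hv : o.valid u) (b l : ℕ) :
    tdist ((u.drop b).take l) (((o.apply u).drop b).take l) ≤ 1 := by
  rcases o.exists_restrict hv b l with h | ⟨o', hv', ho'⟩
  · rw [o.take_drop_apply_of_not_meets h u, tdist_self]
    exact zero_le_one
  · convert tdist_apply_le_one hv'
    refine (List.ext_bit (by simp [length_apply]) fun j => ?_).symm
    rw [o'.bit_apply hv', bit_take_drop, bit_take_drop, o.bit_apply hv]
    by_cases hj : j < l <;> simp [hj, ho']

end TOp

theorem swap_or_tdist_eq_two {w w' : List Bool} (hl : w.length = w'.length)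
    (hle : tdist w w' ≤ 2) {j₁ j₂ : ℕ} (hj : j₁ ≠ j₂) (h₁ : bit w j₁ ≠ bit w' j₁)
    (h₂ : bit w j₂ ≠ bit w' j₂) :
    (∃ i, (TOp.S i).valid w ∧ (TOp.S i).apply w = w') ∨ tdist w w' = 2 := by
  obtain ⟨ops, hlen, hops⟩ := exists_transforms_length_eq_tdist hl
  interval_cases hd : tdist w w'
  · exact absurd (by rw [eq_of_tdist_eq_zero hl hd]) h₁
  · obtain ⟨o, rfl⟩ := List.length_eq_one_iff.1 hlen
    have hm := hops.mem_touched_iff (List.pairwise_singleton _ _)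
    cases o with
    | R i =>
      have hR : ∀ j, bit w j ≠ bit w' j → j = i := fun j hj => by
        simpa [mem_touched, TOp.positions] using (hm j).2 hj
      exact absurd ((hR j₁ h₁).trans (hR j₂ h₂).symm) hj
    | S i => exact Or.inl ⟨i, hops.1.1, hops.2⟩
  · exact Or.inr rfl

theorem exists_overlap_of_meets {f u : List Bool} {o k : TOp} (hvo : o.valid u) (hvk : k.valid u)
    (hd : Disjoint o.positions k.positions) {a b : ℕ} (hab : a < b)
    (hfo : ((o.apply u).drop a).take f.length = f) (hfk : ((k.apply u).drop b).take f.length = f)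
    (ho : o.Meets b (a + f.length)) (hk : k.Meets b (a + f.length)) :
    ∃ l, 1 ≤ l ∧ l ≤ f.length - 1 ∧
      ((∃ i, (TOp.S i).valid (f.take l) ∧ (TOp.S i).apply (f.take l) = f.drop (f.length - l)) ∨
        tdist (f.take l) (f.drop (f.length - l)) = 2) := by
  set n := f.length
  obtain ⟨q₁, hq₁, hbq₁, hq₁n⟩ := ho
  obtain ⟨q₂, hq₂, hbq₂, hq₂n⟩ := hk
  set l := a + n - b
  have hpre : f.take l = ((k.apply u).drop b).take l := by
    rw [← hfk, List.take_take, min_eq_left (by omega)]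
  have hsuf : f.drop (n - l) = ((o.apply u).drop b).take l := by
    rw [← hfo, List.drop_take, List.drop_drop, show a + (n - l) = b by omega,
      show n - (n - l) = l by omega]
  have hle : tdist (f.take l) (f.drop (n - l)) ≤ 2 := by
    rw [hpre, hsuf]
    have hk' := k.tdist_take_drop_apply_le_one (TOp.valid_apply hvk) b l
    rw [TOp.apply_apply hvk] at hk'
    calc _ ≤ _ + _ := tdist_triangle (by simp [TOp.length_apply]) (by simp [TOp.length_apply])
      _ ≤ 1 + 1 := add_le_add hk' (o.tdist_take_drop_apply_le_one hvo b l)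
  have hmis : ∀ q, b ≤ q → q < a + n → q ∈ o.positions ∨ q ∈ k.positions →
      bit (f.take l) (q - b) ≠ bit (f.drop (n - l)) (q - b) := by
    intro q hbq hqn hq
    have hql : q - b < l := by omega
    rw [hpre, hsuf, bit_take_drop, bit_take_drop, if_pos hql, if_pos hql, Nat.add_sub_cancel' hbq]
    rcases hq with hq | hq
    · rw [k.bit_apply_of_not_mem (Finset.disjoint_left.1 hd hq), o.bit_apply hvo, if_pos hq]
      simp
    · rw [k.bit_apply hvk, if_pos hq, o.bit_apply_of_not_mem (Finset.disjoint_right.1 hd hq)]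
      simp
  have hq : q₁ ≠ q₂ := fun h => Finset.disjoint_left.1 hd hq₁ (h ▸ hq₂)
  exact ⟨l, by omega, by omega, swap_or_tdist_eq_two
    (by simp only [List.length_take, List.length_drop]; omega) hle
    (show q₁ - b ≠ q₂ - b by omega) (hmis q₁ hbq₁ hq₁n (Or.inl hq₁))
    (hmis q₂ hbq₂ hq₂n (Or.inr hq₂))⟩

theorem TOp.lastPos_lt_of_not_meets_overlap {y k : TOp} (hd : Disjoint y.positions k.positions)
    {a b n : ℕ} (hy : y.Meets a (a + n)) (hka : k.Meets a (a + n)) (hkb : k.Meets b (b + n))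
    (hno : ¬(y.Meets b (a + n) ∧ k.Meets b (a + n))) : y.lastPos < b := by
  rw [TOp.disjoint_positions_iff] at hd
  simp only [TOp.meets_iff] at *
  have := y.lastPos_le
  have := k.lastPos_le
  omega

theorem exists_meets_overlap {L : List TOp} (hL : L ≠ []) (hdisj : eachPosOnce L)
    {A : TOp → ℕ} (hA : Set.InjOn A {o | o ∈ L}) {n : ℕ}
    (hown : ∀ o ∈ L, o.Meets (A o) (A o + n))
    (hext : ∀ o ∈ L, ∃ k ∈ L, k ≠ o ∧ k.Meets (A o) (A o + n)) :
    ∃ o ∈ L, ∃ k ∈ L, A o < A k ∧ o.Meets (A k) (A o + n) ∧ k.Meets (A k) (A o + n) := by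
  classical
  by_contra! hno
  have hend : ∀ y ∈ L, ∀ k ∈ L, A y < A k → k.Meets (A y) (A y + n) → y.lastPos < A k :=
    fun y hy k hk hlt hky => TOp.lastPos_lt_of_not_meets_overlap
      (hdisj.disjoint hy hk (ne_of_apply_ne A hlt.ne)) (hown y hy) hky (hown k hk)
      fun ⟨h1, h2⟩ => hno y hy k hk hlt h1 h2
  set G := L.toFinset.filter fun m => ∀ y ∈ L, A y < A m → y.lastPos < A m
  have hstep : ∀ m ∈ G, ∃ k ∈ G, A m < A k := by
    intro m hm
    obtain ⟨hmL, hmG⟩ := Finset.mem_filter.1 hm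
    rw [List.mem_toFinset] at hmL
    obtain ⟨k, hk, hkm, hkmeets⟩ := hext m hmL
    have hmk : A m < A k := by
      rcases lt_trichotomy (A m) (A k) with h | h | h
      · exact h
      · exact absurd (hA hk hmL h.symm) hkm
      · have := hmG k hk h
        rw [TOp.meets_iff] at hkmeets
        omega
    refine ⟨k, Finset.mem_filter.2 ⟨List.mem_toFinset.2 hk, fun y hy hyk => ?_⟩, hmk⟩
    rcases lt_trichotomy (A y) (A m) with h | h | h
    · exact (hmG y hy h).trans hmk
    · exact hA hy hmL h ▸ hend m hmL k hk hmk hkmeets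
    · refine hend y hy k hk hyk ?_
      have := hown k hk
      rw [TOp.meets_iff] at this hkmeets ⊢
      omega
  obtain ⟨m₀, hm₀, hmin⟩ := L.toFinset.exists_min_image A (by simpa using hL)
  have hG : G.Nonempty := ⟨m₀, Finset.mem_filter.2 ⟨hm₀, fun y hy hlt =>
    absurd (hmin y (List.mem_toFinset.2 hy)) (not_le.2 hlt)⟩⟩
  obtain ⟨m, hm, hmax⟩ := G.exists_max_image A hG
  obtain ⟨k, hk, hlt⟩ := hstep m hm
  exact absurd (hmax k hk) (not_le.2 hlt)

def BadPair (f u v : List Bool) : Prop :=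
  u.length = v.length ∧ FFree f u ∧ FFree f v ∧ ∀ ops, MinimalTransf ops u v → ¬FreeTransf f ops u

theorem exists_badPair_tdist_min {f : List Bool} (h : ¬TildeIsometric f) :
    ∃ u v, BadPair f u v ∧ ∀ u' v', BadPair f u' v' → tdist u v ≤ tdist u' v' := by
  obtain ⟨u, v, hb⟩ : ∃ u v, BadPair f u v := by
    by_contra! hno
    refine h fun u v hl _ hu hv => ?_
    by_contra! hops
    exact hno u v ⟨hl, hu, hv, hops⟩
  obtain ⟨⟨u, v⟩, hb, hmin⟩ := (measure fun p : List Bool × List Bool => tdist p.1 p.2).wf.has_min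
    {p | BadPair f p.1 p.2} ⟨(u, v), hb⟩
  exact ⟨u, v, hb, fun u' v' hb' => not_lt.1 (hmin (u', v') hb')⟩

theorem BadPair.ne_nil {f u v : List Bool} (hb : BadPair f u v) {ops : List TOp}
    (hops : MinimalTransf ops u v) : ops ≠ [] := by
  rintro rfl
  exact hb.2.2.2 [] hops (by simpa [FreeTransf, trajectory] using hb.2.1)

theorem BadPair.infix_apply {f u v : List Bool} (hb : BadPair f u v)
    (hmin : ∀ u' v', BadPair f u' v' → tdist u v ≤ tdist u' v') {ops : List TOp}
    (hops : MinimalTransf ops u v) {o : TOp} (ho : o ∈ ops) : f <:+: o.apply u := by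
  by_contra hfree
  have hlt := hops.tdist_apply_add_one ho
  obtain ⟨ops₁, h₁, hfree₁⟩ :
      ∃ ops₁, MinimalTransf ops₁ (o.apply u) v ∧ FreeTransf f ops₁ (o.apply u) := by
    by_contra! hno
    have := hmin _ _ ⟨(o.length_apply u).trans hb.1, hfree, hb.2.2.1, hno⟩
    omega
  exact hb.2.2.2 _ (hops.cons ho h₁) (freeTransf_cons.2 ⟨hb.2.1, hfree₁⟩)

theorem TOp.meets_of_take_drop_apply_eq {f u : List Bool} (hu : FFree f u) {o : TOp} {a : ℕ}
    (ha : ((o.apply u).drop a).take f.length = f) : o.Meets a (a + f.length) := by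
  by_contra hm
  exact hu (infix_iff_exists_take_drop.2 ⟨a, o.take_drop_apply_of_not_meets hm u ▸ ha⟩)

theorem exists_meets_of_take_drop_apply_eq {f u v : List Bool} (hv : FFree f v)
    {ops : List TOp} (h : Transforms ops u v) (he : eachPosOnce ops) {o : TOp} (ho : o ∈ ops)
    {a : ℕ} (ha : ((o.apply u).drop a).take f.length = f) :
    ∃ k ∈ ops, k ≠ o ∧ k.Meets a (a + f.length) := by
  by_contra! hno
  refine hv (infix_iff_exists_take_drop.2 ⟨a, Eq.trans ?_ ha⟩)
  refine take_drop_eq_of_bit_eq (h.length_eq.symm.trans (o.length_apply u).symm)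
    fun p hap hpn => ?_
  have hto : p ∈ touched ops ↔ p ∈ o.positions := by
    refine ⟨fun hp => ?_, fun hp => mem_touched.2 ⟨o, ho, hp⟩⟩
    obtain ⟨k, hk, hpk⟩ := mem_touched.1 hp
    by_contra hpo
    exact hno k hk (by rintro rfl; exact hpo hpk) ⟨p, hpk, hap, hpn⟩
  rw [← h.2, bit_applySeq he h.1, o.bit_apply ((validSeq_iff_of_eachPosOnce he).1 h.1 o ho)]
  simp only [hto]

theorem stmt8 (f : List Bool) (h : ¬ TildeIsometric f) :
    (∃ l i, 1 ≤ l ∧ l ≤ f.length - 1 ∧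
        (TOp.S i).valid (f.take l) ∧ (TOp.S i).apply (f.take l) = f.drop (f.length - l)) ∨
    (∃ l, 1 ≤ l ∧ l ≤ f.length - 1 ∧ tdist (f.take l) (f.drop (f.length - l)) = 2) := by
  obtain ⟨u, v, hb, hmin⟩ := exists_badPair_tdist_min h
  obtain ⟨ops, hops⟩ := exists_minimalTransf hb.1
  have hvalid := (validSeq_iff_of_eachPosOnce hops.2.2).1 hops.1.1
  have hocc : ∀ o ∈ ops, ∃ a, ((o.apply u).drop a).take f.length = f := fun o ho =>
    infix_iff_exists_take_drop.1 (hb.infix_apply hmin hops ho)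
  choose! A hA using hocc
  have hown := fun o ho => TOp.meets_of_take_drop_apply_eq hb.2.1 (hA o ho)
  have hinj : Set.InjOn A {o | o ∈ ops} := fun o ho k hk hAk => by
    by_contra hne
    exact TOp.take_drop_apply_ne (hvalid o ho) (hops.2.2.disjoint ho hk hne) (hown o ho)
      ((hA o ho).trans (hAk ▸ hA k hk).symm)
  obtain ⟨o, ho, k, hk, hlt, hmo, hmk⟩ := exists_meets_overlap (hb.ne_nil hops) hops.2.2 hinj
    hown fun o ho => exists_meets_of_take_drop_apply_eq hb.2.2.1 hops.1 hops.2.2 ho (hA o ho)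
  obtain ⟨l, hl₁, hl₂, ⟨i, hi⟩ | h2⟩ := exists_overlap_of_meets (hvalid o ho) (hvalid k hk)
    (hops.2.2.disjoint ho hk (ne_of_apply_ne A hlt.ne)) hlt (hA o ho) (hA k hk) hmo hmk
  · exact Or.inl ⟨l, i, hl₁, hl₂, hi⟩
  · exact Or.inr ⟨l, hl₁, hl₂, h2⟩
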